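/- If a domain D in the d-regular tree T_d with |D| ≥ 2 is isoperimetrically optimal, then |R(D)| ≤ d − 2. -/

import Mathlib

/-- Inner vertex boundary of a finite vertex set `D`: vertices of `D` having a neighbor
outside `D`. -/
noncomputable def innerBoundary {V : Type*} (G : SimpleGraph V) (D : Finset V) : Finset V := by
  classical exact D.filter (fun x => ∃ y, y ∉ D ∧ G.Adj x y)

/-- Outer vertex boundary of `D`: vertices outside `D` having a neighbor in `D`. -/
def outerBoundary {V : Type*} (G : SimpleGraph V) (D : Finset V) : Set V :=
  {y | y ∉ D ∧ ∃ x ∈ D, G.Adj x y}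

/-- Number of neighbors of `x` lying in `D`. -/
noncomputable def degIn {V : Type*} (G : SimpleGraph V) (D : Finset V) (x : V) : ℕ := by
  classical exact (D.filter (fun y => G.Adj x y)).card

/-- A domain: a finite nonempty vertex set whose induced subgraph is connected. -/
def IsGraphDomain {V : Type*} (G : SimpleGraph V) (D : Finset V) : Prop :=
  D.Nonempty ∧ (G.induce (↑D : Set V)).Connected

/-- `G` is a `d`-regular tree: connected, acyclic, and every vertex has degree `d`. -/
def IsRegularTree {V : Type*} (G : SimpleGraph V) (d : ℕ) : Prop :=
  G.Connected ∧ G.IsAcyclic ∧ ∀ v : V, (G.neighborSet v).ncard = d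

/-- Boundary branching excess `τ(D) = Σ_{x ∈ ∂D} (deg_D(x) − 1)`. -/
noncomputable def tauD {V : Type*} (G : SimpleGraph V) (D : Finset V) : ℕ :=
  ∑ x ∈ innerBoundary G D, (degIn G D x - 1)

/-- Residual boundary `R(D) = {x ∈ ∂D : deg_D(x) ≥ 2}`. -/
noncomputable def residualBoundary {V : Type*} (G : SimpleGraph V) (D : Finset V) : Finset V := by
  classical exact (innerBoundary G D).filter (fun x => 2 ≤ degIn G D x)

/-- `D` is isoperimetrically optimal: its inner boundary is smallest among all domains
of the same cardinality. -/
def IsOptimal {V : Type*} (G : SimpleGraph V) (D : Finset V) : Prop :=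
  ∀ D' : Finset V, IsGraphDomain G D' → D'.card = D.card →
    (innerBoundary G D).card ≤ (innerBoundary G D').card

/-!
The subgraph induced on a domain `D` of a tree is a tree, so `Σ_{x ∈ D} deg_D x = 2|D| - 2`.
Interior vertices contribute `d` each, whence `τ(D) = (d - 1)|∂D| - (d - 2)|D| - 2`: among domains
of a fixed size, `τ` is smallest where `|∂D|` is, i.e. at optimal domains. Growing a domain one
vertex at a time, always attached at the (at most one) vertex of `R`, keeps `|R| ≤ 1`, so every
size is realised by a domain with `τ ≤ d - 2`. As each vertex of `R(D)` contributes at least `1`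
to `τ(D)`, an optimal `D` has `|R(D)| ≤ τ(D) ≤ d - 2`.
-/

open SimpleGraph Finset

section Boundary

variable {V : Type*} (G : SimpleGraph V) (D : Finset V)

lemma mem_innerBoundary {x : V} :
    x ∈ innerBoundary G D ↔ x ∈ D ∧ ∃ y, y ∉ D ∧ G.Adj x y := by
  classical
  unfold innerBoundary; exact mem_filter

lemma mem_residualBoundary {x : V} :
    x ∈ residualBoundary G D ↔ x ∈ innerBoundary G D ∧ 2 ≤ degIn G D x := by
  classical
  unfold residualBoundary; exact mem_filter

lemma innerBoundary_subset : innerBoundary G D ⊆ D :=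
  fun _ hx => ((mem_innerBoundary G D).mp hx).1

lemma residualBoundary_subset_innerBoundary : residualBoundary G D ⊆ innerBoundary G D :=
  fun _ hx => ((mem_residualBoundary G D).mp hx).1

lemma degIn_eq_ncard (x : V) : degIn G D x = (G.neighborSet x ∩ ↑D).ncard := by
  classical
  rw [degIn, ← Set.ncard_coe_finset]
  congr 1
  ext y
  simp [and_comm]

lemma degIn_eq_ncard_neighborSet {x : V} (hx : x ∈ D) (hx' : x ∉ innerBoundary G D) :
    degIn G D x = (G.neighborSet x).ncard := by
  rw [degIn_eq_ncard, Set.inter_eq_left.mpr]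
  intro y hy
  by_contra hyD
  exact hx' ((mem_innerBoundary G D).mpr ⟨hx, y, hyD, hy⟩)

lemma degIn_lt_ncard_neighborSet {x : V} (hfin : (G.neighborSet x).Finite)
    (hx : x ∈ innerBoundary G D) : degIn G D x < (G.neighborSet x).ncard := by
  obtain ⟨-, y, hyD, hxy⟩ := (mem_innerBoundary G D).mp hx
  rw [degIn_eq_ncard]
  exact Set.ncard_lt_ncard
    (Set.ssubset_iff_of_subset Set.inter_subset_left |>.mpr ⟨y, hxy, fun h => hyD h.2⟩) hfin

lemma card_residualBoundary_le_tauD : (residualBoundary G D).card ≤ tauD G D := by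
  calc (residualBoundary G D).card = ∑ _x ∈ residualBoundary G D, 1 := by simp
    _ ≤ ∑ x ∈ residualBoundary G D, (degIn G D x - 1) :=
        sum_le_sum fun x hx => by have := ((mem_residualBoundary G D).mp hx).2; omega
    _ ≤ tauD G D := sum_le_sum_of_subset (residualBoundary_subset_innerBoundary G D)

lemma tauD_eq_sum_residualBoundary :
    tauD G D = ∑ x ∈ residualBoundary G D, (degIn G D x - 1) := by
  refine (sum_subset (residualBoundary_subset_innerBoundary G D) fun x hx hxR => ?_).symm
  have : ¬ 2 ≤ degIn G D x := fun h => hxR ((mem_residualBoundary G D).mpr ⟨hx, h⟩)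
  omega

end Boundary

section Domain

variable {V : Type*} {G : SimpleGraph V} {D : Finset V}

lemma isGraphDomain_singleton (v : V) : IsGraphDomain G {v} := by
  refine ⟨singleton_nonempty v, ?_⟩
  rw [coe_singleton]
  exact .of_subsingleton

lemma IsGraphDomain.insert_of_adj [DecidableEq V] (hD : IsGraphDomain G D) {x y : V} (hx : x ∈ D)
    (hxy : G.Adj x y) : IsGraphDomain G (insert y D) := by
  refine ⟨insert_nonempty y D, ?_⟩
  have hset : (↑(insert y D) : Set V) = ↑D ∪ {x, y} := by
    ext v; simp only [coe_insert, Set.mem_insert_iff, mem_coe, Set.mem_union,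
      Set.mem_singleton_iff]; grind
  rw [hset]
  exact induce_union_connected hD.2.preconnected (induce_pair_connected_of_adj hxy).preconnected
    ⟨x, hx, Set.mem_insert x _⟩

lemma IsGraphDomain.exists_isPath (hD : IsGraphDomain G D) {x z : V} (hx : x ∈ D) (hz : z ∈ D) :
    ∃ p : G.Walk x z, p.IsPath ∧ ∀ v ∈ p.support, v ∈ D := by
  classical
  obtain ⟨w⟩ := hD.2.preconnected ⟨x, hx⟩ ⟨z, hz⟩
  let p := (w.map (Embedding.induce (↑D : Set V)).toHom).toPath
  refine ⟨p.1, p.2, fun v hv => ?_⟩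
  obtain ⟨u, -, rfl⟩ := List.mem_map.mp
    (Walk.support_map _ w ▸ Walk.support_toPath_subset_support _ hv)
  exact u.2

lemma IsGraphDomain.exists_adj (hD : IsGraphDomain G D) (h2 : 2 ≤ D.card) {x : V} (hx : x ∈ D) :
    ∃ y ∈ D, G.Adj x y := by
  have : Nontrivial (↑D : Set V) :=
    Set.nontrivial_coe_sort.mpr (one_lt_card_iff_nontrivial.mp h2)
  obtain ⟨y, hxy⟩ := hD.2.preconnected.exists_adj_of_nontrivial ⟨x, hx⟩
  exact ⟨y, y.2, hxy⟩

lemma IsGraphDomain.one_le_degIn (hD : IsGraphDomain G D) (h2 : 2 ≤ D.card) {x : V} (hx : x ∈ D) :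
    1 ≤ degIn G D x := by
  classical
  obtain ⟨y, hy, hxy⟩ := hD.exists_adj h2 hx
  exact card_pos.mpr ⟨y, mem_filter.mpr ⟨hy, hxy⟩⟩

lemma IsGraphDomain.eq_of_adj_of_adj (hac : G.IsAcyclic) (hD : IsGraphDomain G D) {x z y : V}
    (hx : x ∈ D) (hz : z ∈ D) (hy : y ∉ D) (hyx : G.Adj y x) (hyz : G.Adj y z) : x = z := by
  obtain ⟨p, hp, hpD⟩ := hD.exists_isPath hx hz
  have hq : (Walk.cons hyx p).IsPath := hp.cons fun hmem => hy (hpD y hmem)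
  have := hac.eq_snd_of_adj_start hq hyz (Walk.end_mem_support _)
  rw [Walk.snd_cons] at this
  exact this.symm

lemma IsGraphDomain.sum_degIn_add_two (hac : G.IsAcyclic) (hD : IsGraphDomain G D) :
    ∑ x ∈ D, degIn G D x + 2 = 2 * D.card := by
  classical
  let H := G.induce (↑D : Set V)
  have htree : H.IsTree := ⟨hD.2, hac.induce _⟩
  have hdeg : ∀ v : (↑D : Set V), H.degree v = degIn G D v := fun v => by
    rw [degIn, ← card_neighborFinset_eq_degree]
    refine card_bij (fun z _ => z.1) (fun z hz => ?_) (fun a _ b _ h => Subtype.ext h)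
      (fun y hy => ?_)
    · exact mem_filter.mpr ⟨z.2, (mem_neighborFinset H _ _).mp hz⟩
    · exact ⟨⟨y, (mem_filter.mp hy).1⟩, (mem_neighborFinset H _ _).mpr (mem_filter.mp hy).2, rfl⟩
  have hsum : ∑ v : (↑D : Set V), H.degree v = ∑ x ∈ D, degIn G D x := by
    simp_rw [hdeg]; exact sum_coe_sort D (degIn G D)
  have := H.sum_degrees_eq_twice_card_edges
  have := htree.card_edgeFinset
  simp only [coe_sort_coe, Fintype.card_coe] at this
  omega

-- `y` has no neighbour in `D` other than `x`, so it joins as a leaf and only `x` gains a neighbour.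
lemma residualBoundary_insert_subset [DecidableEq V] (hac : G.IsAcyclic) (hD : IsGraphDomain G D)
    {x y : V} (hx : x ∈ D) (hy : y ∉ D) (hxy : G.Adj x y) :
    residualBoundary G (insert y D) ⊆ insert x (residualBoundary G D) := by
  intro z hz
  obtain ⟨hzB, hz2⟩ := (mem_residualBoundary G _).mp hz
  obtain ⟨hzD', w, hwD', hzw⟩ := (mem_innerBoundary G _).mp hzB
  rcases mem_insert.mp hzD' with rfl | hzD
  · have hle : G.neighborSet z ∩ ↑(insert z D) ⊆ {x} := fun v ⟨hzv, hvD'⟩ => by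
      rcases mem_insert.mp hvD' with rfl | hvD
      · exact absurd hzv (G.loopless.irrefl v)
      · exact hD.eq_of_adj_of_adj hac hvD hx hy hzv hxy.symm
    have := Set.ncard_le_ncard hle (Set.finite_singleton x)
    rw [Set.ncard_singleton, ← degIn_eq_ncard] at this
    omega
  · by_cases hzx : z = x
    · exact mem_insert.mpr (Or.inl hzx)
    have hzy : ¬ G.Adj z y := fun h => hzx (hD.eq_of_adj_of_adj hac hzD hx hy h.symm hxy.symm)
    have hdeg : degIn G (insert y D) z = degIn G D z := by
      rw [degIn, degIn, filter_insert, if_neg hzy]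
    have hzB : z ∈ innerBoundary G D :=
      (mem_innerBoundary G D).mpr ⟨hzD, w, fun hw => hwD' (mem_insert_of_mem hw), hzw⟩
    exact mem_insert_of_mem ((mem_residualBoundary G D).mpr ⟨hzB, hdeg ▸ hz2⟩)

end Domain

section Regular

variable {V : Type*} {G : SimpleGraph V} {D : Finset V} {d : ℕ}

lemma degIn_le_of_mem_innerBoundary (hreg : ∀ v, (G.neighborSet v).ncard = d) (hd : d ≠ 0)
    {x : V} (hx : x ∈ innerBoundary G D) : degIn G D x ≤ d - 1 := by
  have := degIn_lt_ncard_neighborSet G D (Set.finite_of_ncard_ne_zero (hreg x ▸ hd)) hx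
  rw [hreg] at this
  omega

lemma tauD_le_card_residualBoundary_mul (hreg : ∀ v, (G.neighborSet v).ncard = d) (hd : d ≠ 0) :
    tauD G D ≤ (residualBoundary G D).card * (d - 2) := by
  rw [tauD_eq_sum_residualBoundary, ← smul_eq_mul, ← sum_const]
  refine sum_le_sum fun x hx => ?_
  have := degIn_le_of_mem_innerBoundary hreg hd (residualBoundary_subset_innerBoundary G D hx)
  omega

lemma IsGraphDomain.tauD_eq (hreg : ∀ v, (G.neighborSet v).ncard = d) (hac : G.IsAcyclic)
    (hD : IsGraphDomain G D) (h2 : 2 ≤ D.card) :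
    (tauD G D : ℤ) = (d - 1) * (innerBoundary G D).card - (d - 2) * D.card - 2 := by
  classical
  have hsub := innerBoundary_subset G D
  have hinterior : ∑ x ∈ D \ innerBoundary G D, degIn G D x
      = d * (D.card - (innerBoundary G D).card) := by
    rw [sum_congr rfl fun x hx => (degIn_eq_ncard_neighborSet G D (mem_sdiff.mp hx).1
      (mem_sdiff.mp hx).2).trans (hreg x), sum_const, smul_eq_mul, card_sdiff_of_subset hsub,
      mul_comm]
  have hboundary : ∑ x ∈ innerBoundary G D, degIn G D x = tauD G D + (innerBoundary G D).card := by
    rw [tauD, card_eq_sum_ones, ← sum_add_distrib]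
    exact sum_congr rfl fun x hx => (Nat.sub_add_cancel (hD.one_le_degIn h2 (hsub hx))).symm
  have hsum := hD.sum_degIn_add_two hac
  rw [← sum_sdiff hsub, hinterior, hboundary] at hsum
  have hle := card_le_card hsub
  zify [hle] at hsum
  linarith

lemma IsGraphDomain.tauD_le_tauD (hreg : ∀ v, (G.neighborSet v).ncard = d) (hac : G.IsAcyclic)
    (hd : 1 ≤ d) {D' : Finset V} (hD : IsGraphDomain G D) (hD' : IsGraphDomain G D')
    (h2 : 2 ≤ D.card) (hcard : D'.card = D.card)
    (hle : (innerBoundary G D).card ≤ (innerBoundary G D').card) : tauD G D ≤ tauD G D' := by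
  have e := hD.tauD_eq hreg hac h2
  have e' := hD'.tauD_eq hreg hac (hcard ▸ h2)
  have : ((d : ℤ) - 1) * (innerBoundary G D).card ≤ ((d : ℤ) - 1) * (innerBoundary G D').card :=
    mul_le_mul_of_nonneg_left (by exact_mod_cast hle) (by omega)
  rw [hcard] at e'
  zify
  linarith

lemma IsGraphDomain.innerBoundary_nonempty (hreg : ∀ v, (G.neighborSet v).ncard = d)
    (hac : G.IsAcyclic) (hd : 2 ≤ d) (hD : IsGraphDomain G D) : (innerBoundary G D).Nonempty := by
  by_contra h
  rw [not_nonempty_iff_eq_empty] at h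
  have hsum := hD.sum_degIn_add_two hac
  rw [sum_congr rfl fun x hx => (degIn_eq_ncard_neighborSet G D hx (h ▸ notMem_empty x)).trans
    (hreg x), sum_const, smul_eq_mul] at hsum
  nlinarith [card_pos.mpr hD.1]

lemma exists_isGraphDomain_card_residualBoundary_le_one [Nonempty V]
    (hreg : ∀ v, (G.neighborSet v).ncard = d) (hac : G.IsAcyclic) (hd : 2 ≤ d) {n : ℕ}
    (hn : 1 ≤ n) :
    ∃ D : Finset V, IsGraphDomain G D ∧ D.card = n ∧ (residualBoundary G D).card ≤ 1 := by
  classical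
  induction n, hn using Nat.le_induction with
  | base =>
    obtain ⟨v⟩ := ‹Nonempty V›
    refine ⟨{v}, isGraphDomain_singleton v, card_singleton v, ?_⟩
    exact card_le_card ((residualBoundary_subset_innerBoundary G _).trans
      (innerBoundary_subset G _)) |>.trans_eq (card_singleton v)
  | succ n _ ih =>
    obtain ⟨D, hD, rfl, hR⟩ := ih
    obtain ⟨x, hxB, hRx⟩ : ∃ x ∈ innerBoundary G D, residualBoundary G D ⊆ {x} := by
      by_cases hne : (residualBoundary G D).Nonempty
      · obtain ⟨x, hx⟩ := hne
        exact ⟨x, residualBoundary_subset_innerBoundary G D hx,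
          fun z hz => mem_singleton.mpr (card_le_one.mp hR z hz x hx)⟩
      · obtain ⟨x, hx⟩ := hD.innerBoundary_nonempty hreg hac hd
        rw [not_nonempty_iff_eq_empty.mp hne]
        exact ⟨x, hx, empty_subset _⟩
    obtain ⟨hxD, y, hyD, hxy⟩ := (mem_innerBoundary G D).mp hxB
    refine ⟨insert y D, hD.insert_of_adj hxD hxy, card_insert_of_notMem hyD, ?_⟩
    refine card_le_one_iff_subset_singleton.mpr ⟨x, ?_⟩
    exact (residualBoundary_insert_subset hac hD hxD hyD hxy).trans
      (insert_subset (mem_singleton_self x) hRx)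

end Regular

/-- If a domain `D` with `|D| ≥ 2` is isoperimetrically optimal, then `|R(D)| ≤ d − 2`. -/
theorem stmt_12 {V : Type*} (d : ℕ) (hd : 2 ≤ d) (T : SimpleGraph V)
    (hT : IsRegularTree T d) (D : Finset V) (hD : IsGraphDomain T D) (hcard : 2 ≤ D.card)
    (hopt : IsOptimal T D) :
    (residualBoundary T D).card ≤ d - 2 := by
  obtain ⟨-, hac, hreg⟩ := hT
  have : Nonempty V := hD.1.to_type
  obtain ⟨D', hD', hcard', hR'⟩ :=
    exists_isGraphDomain_card_residualBoundary_le_one hreg hac hd (by omega : 1 ≤ D.card)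
  calc (residualBoundary T D).card ≤ tauD T D := card_residualBoundary_le_tauD T D
    _ ≤ tauD T D' := hD.tauD_le_tauD hreg hac (by omega) hD' hcard hcard' (hopt D' hD' hcard')
    _ ≤ (residualBoundary T D').card * (d - 2) := tauD_le_card_residualBoundary_mul hreg (by omega)
    _ ≤ 1 * (d - 2) := Nat.mul_le_mul_right _ hR'
    _ = d - 2 := one_mul _
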